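/- arXiv:2404.02483 — 6 statements merged into one kernel-verified Lean document; each statement's English description precedes it below -/
import Mathlib

section
/- Let λ and μ be partitions with at most n parts with μ ⊆ λ, and suppose λ_k = μ_k for some 1 ≤ k ≤ n. Let M be the n×n matrix whose (i,j) entry is a_{i,j} with a_{i,j} = 0 whenever λ_i - μ_j - i + j < 0. Then λ_i - μ_j - i + j < 0 for all i > k ≥ j and for all i ≥ k > j with (i,j) ≠ (k,k), hence det M = det(a_{i,j})_{i,j=1}^{k-1} · det(a_{i,j})_{i,j=k}^{n}. -/
/-- Block-factorization lemma: let `λ, μ` be partitions with at most `n` parts,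
`μ ⊆ λ`, and `λ_k = μ_k` for some `1 ≤ k ≤ n` (1-indexed).  If the matrix
entries satisfy `a i j = 0` whenever `λ_i - μ_j - i + j < 0`, then
`λ_i - μ_j - i + j < 0` for all `(i,j)` with `i ≥ k ≥ j`, `(i,j) ≠ (k,k)`, and
consequently `det a = det (a)_{1..k-1} · det (a)_{k..n}`. -/
theorem det_block_factorization {R : Type*} [CommRing R] (n k : ℕ)
    (hk1 : 1 ≤ k) (hk2 : k ≤ n)
    (lam mu : Fin n → ℕ)
    (hlam : ∀ i j : Fin n, i ≤ j → lam j ≤ lam i)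
    (hmu : ∀ i j : Fin n, i ≤ j → mu j ≤ mu i)
    (hsub : ∀ i : Fin n, mu i ≤ lam i)
    (hk : lam ⟨k - 1, by omega⟩ = mu ⟨k - 1, by omega⟩)
    (a : Matrix (Fin n) (Fin n) R)
    (ha : ∀ i j : Fin n,
      (lam i : ℤ) - (mu j : ℤ) - ((i : ℕ) : ℤ) + ((j : ℕ) : ℤ) < 0 → a i j = 0) :
    (∀ i j : Fin n, k - 1 ≤ (i : ℕ) → (j : ℕ) ≤ k - 1 →
        ((i : ℕ), (j : ℕ)) ≠ (k - 1, k - 1) →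
        (lam i : ℤ) - (mu j : ℤ) - ((i : ℕ) : ℤ) + ((j : ℕ) : ℤ) < 0) ∧
    a.det =
      (Matrix.of fun i j : Fin (k - 1) =>
          a ⟨i, by have := i.isLt; omega⟩ ⟨j, by have := j.isLt; omega⟩).det *
      (Matrix.of fun i j : Fin (n - k + 1) =>
          a ⟨k - 1 + i, by have := i.isLt; omega⟩
            ⟨k - 1 + j, by have := j.isLt; omega⟩).det := by
  have hkn : k - 1 < n := by omega
  have hK : ∀ i j : Fin n, k - 1 ≤ (i : ℕ) → (j : ℕ) ≤ k - 1 →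
      ((i : ℕ), (j : ℕ)) ≠ (k - 1, k - 1) →
      (lam i : ℤ) - (mu j : ℤ) - ((i : ℕ) : ℤ) + ((j : ℕ) : ℤ) < 0 := by
    intro i j hi hj hne
    have hne' : ¬((i : ℕ) = k - 1 ∧ (j : ℕ) = k - 1) := by
      intro h; exact hne (by simp [h.1, h.2])
    have h1 : lam i ≤ lam ⟨k - 1, hkn⟩ := hlam ⟨k - 1, hkn⟩ i (by simp [Fin.le_def]; omega)
    have h2 : mu ⟨k - 1, hkn⟩ ≤ mu j := hmu j ⟨k - 1, hkn⟩ (by simp [Fin.le_def]; omega)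
    omega
  refine ⟨hK, ?_⟩
  have hn : (k - 1) + (n - k + 1) = n := by omega
  let e : Fin (k - 1) ⊕ Fin (n - k + 1) ≃ Fin n := finSumFinEquiv.trans (finCongr hn)
  have hel : ∀ i : Fin (k - 1), (e (Sum.inl i) : ℕ) = (i : ℕ) := by
    intro i; simp [e]
  have her : ∀ i : Fin (n - k + 1), (e (Sum.inr i) : ℕ) = k - 1 + (i : ℕ) := by
    intro i; simp [e]
  rw [← Matrix.det_submatrix_equiv_self e a]
  have hblock : a.submatrix e e = Matrix.fromBlocks
      (Matrix.of fun i j : Fin (k - 1) =>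
          a ⟨i, by have := i.isLt; omega⟩ ⟨j, by have := j.isLt; omega⟩)
      (Matrix.of fun (i : Fin (k - 1)) (j : Fin (n - k + 1)) =>
          a ⟨i, by have := i.isLt; omega⟩ ⟨k - 1 + j, by have := j.isLt; omega⟩)
      0
      (Matrix.of fun i j : Fin (n - k + 1) =>
          a ⟨k - 1 + i, by have := i.isLt; omega⟩
            ⟨k - 1 + j, by have := j.isLt; omega⟩) := by
    ext i j
    cases i with
    | inl i =>
      cases j with
      | inl j =>
        simp only [Matrix.submatrix_apply, Matrix.fromBlocks_apply₁₁, Matrix.of_apply]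
        congr 1 <;> exact Fin.ext (by rw [hel])
      | inr j =>
        simp only [Matrix.submatrix_apply, Matrix.fromBlocks_apply₁₂, Matrix.of_apply]
        congr 1 <;> first
          | exact Fin.ext (by rw [hel])
          | exact Fin.ext (by rw [her])
    | inr i =>
      cases j with
      | inl j =>
        simp only [Matrix.submatrix_apply, Matrix.fromBlocks_apply₂₁, Matrix.zero_apply]
        apply ha
        apply hK
        · rw [her]; omega
        · rw [hel]; have := j.isLt; omega
        · rw [her, hel]; have := j.isLt
          intro h
          have := (Prod.mk.injEq _ _ _ _).mp h
          omega
      | inr j =>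
        simp only [Matrix.submatrix_apply, Matrix.fromBlocks_apply₂₂, Matrix.of_apply]
        congr 1 <;> exact Fin.ext (by rw [her])
  rw [hblock, Matrix.det_fromBlocks_zero₂₁]
end

section
/- For a single cell, i.e. the row shape λ = (1), with entries bounded between r and s (r ≤ s) and parameters α_1, β_1, the weighted generating function of marked multiset-valued tableaux satisfies ∑_{T ∈ MMSVT^{row((r),(s))}((1))} wt(T) = ∏_{l=r}^{s}(1-β_1 x_l) · ∑_{k≥0} h_{1+k}(x_r,…,x_s) · h_k[A_1 - B_0 + B_1], where A_1 - B_0 + B_1 = α_1 + β_1; equivalently, ∑_{r ≤ a_1 ≤ ⋯ ≤ a_k ≤ s, k≥1, with optional marks} x_{a_1}⋯x_{a_k} α_1^{#unmarked - 1}(-β_1)^{#marked} = ∏_{l=r}^{s}(1-β_1x_l) · ∑_{k≥0} h_{1+k}(x_r,…,x_s)·h_k(α_1, β_1). -/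
open MvPolynomial

noncomputable section

/-- Coefficient ring: polynomials in `α = X 0` and `β = X 1`. -/
abbrev ABRing := MvPolynomial (Fin 2) ℚ

def av : ABRing := X 0
def bval : ABRing := X 1

/-- The number of elements (with multiplicity) of the multiset encoded by an
exponent vector `d`. -/
def msize {N : ℕ} (d : Fin N →₀ ℕ) : ℕ := d.sum fun _ n => n

/-- Coefficient of `x^d` in the single-cell generating function of marked
multiset-valued fillings: a marked multiset is the multiset `d` together with a
set `S` of marked values, `S` ranging over subsets of the distinct values of
`d` other than its minimum; the filling with marking `S` has weight
`x^d · α^{#unmarked − 1} · (−β)^{#marked}`. -/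
def cellCoeff {N : ℕ} (d : Fin N →₀ ℕ) : ABRing :=
  if hd : d = 0 then 0
  else
    ∑ S ∈ (d.support.erase
        (d.support.min' (Finsupp.support_nonempty_iff.mpr hd))).powerset,
      av ^ (msize d - S.card - 1) * (-bval) ^ S.card

/-- The single-cell generating function
`∑_{nonempty marked multisets on the variables} x^S α^{u-1}(-β)^v`
as a multivariate power series in the `x`-variables. -/
def cellGF (N : ℕ) : MvPowerSeries (Fin N) ABRing := fun d => cellCoeff d

/-- `h_k(α, β) = ∑_{a+b=k} α^a β^b`. -/
def hAB (k : ℕ) : ABRing := ∑ a ∈ Finset.range (k + 1), av ^ a * bval ^ (k - a)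

/-- `∑_{k≥0} h_{1+k}(x_r,…,x_s)·h_k(α,β)` as a power series in the
`x`-variables: every monomial `x^d` of degree `m ≥ 1` occurs in `h_m(x)` with
coefficient `1`, so the coefficient of `x^d` is `h_{m-1}(α,β)`. -/
def hSeries (N : ℕ) : MvPowerSeries (Fin N) ABRing :=
  fun d => if msize d = 0 then 0 else hAB (msize d - 1)


lemma av_sub_bval_ne : av - bval ≠ 0 := by
  refine sub_ne_zero.mpr ?_
  simpa [av, bval] using fun h => absurd (MvPolynomial.X_injective h) (by decide)

lemma hAB_succ (k : ℕ) : hAB (k + 1) = bval * hAB k + av ^ (k + 1) := by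
  unfold hAB
  rw [Finset.sum_range_succ, Finset.mul_sum]
  congr 1
  · refine Finset.sum_congr rfl fun a ha => ?_
    rw [Finset.mem_range] at ha
    rw [show k + 1 - a = (k - a) + 1 by omega, pow_succ]
    ring
  · simp

lemma sub_mul_hAB (k : ℕ) : (av - bval) * hAB k = av ^ (k + 1) - bval ^ (k + 1) := by
  induction k with
  | zero => simp [hAB]
  | succ k ih =>
    rw [hAB_succ, show (av - bval) * (bval * hAB k + av ^ (k + 1))
        = bval * ((av - bval) * hAB k) + (av - bval) * av ^ (k + 1) by ring, ih]
    ring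

lemma alt_sum_choose (t : ℕ) (ht : t ≠ 0) :
    ∑ j ∈ Finset.range (t + 1), (-1 : ABRing) ^ j * (t.choose j : ABRing) = 0 := by
  have h0 := Int.alternating_sum_range_choose_of_ne ht
  have := congrArg (fun z : ℤ => (z : ABRing)) h0
  push_cast at this
  exact this

lemma key (t m : ℕ) (h1 : 1 ≤ t) (h2 : t ≤ m) :
    ∑ j ∈ Finset.range (t + 1),
        (t.choose j : ABRing) * ((-bval) ^ j *
          (if m - j = 0 then (0 : ABRing) else hAB (m - j - 1)))
      = av ^ (m - t) * (av - bval) ^ (t - 1) := by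
  apply mul_left_cancel₀ av_sub_bval_ne
  rw [Finset.mul_sum]
  have step : ∀ j ∈ Finset.range (t + 1),
      (av - bval) * ((t.choose j : ABRing) * ((-bval) ^ j *
          (if m - j = 0 then (0 : ABRing) else hAB (m - j - 1))))
      = av ^ (m - t) * ((-bval) ^ j * av ^ (t - j) * (t.choose j : ABRing))
        - bval ^ m * ((-1 : ABRing) ^ j * (t.choose j : ABRing)) := by
    intro j hj
    rw [Finset.mem_range, Nat.lt_succ_iff] at hj
    have hDh : (av - bval) * (if m - j = 0 then (0 : ABRing) else hAB (m - j - 1))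
        = av ^ (m - j) - bval ^ (m - j) := by
      by_cases h : m - j = 0
      · simp [h]
      · rw [if_neg h, sub_mul_hAB, show m - j - 1 + 1 = m - j by omega]
    have e1 : av ^ (m - j) = av ^ (m - t) * av ^ (t - j) := by
      rw [← pow_add]; congr 1; omega
    have e2 : (-bval : ABRing) ^ j * bval ^ (m - j) = (-1 : ABRing) ^ j * bval ^ m := by
      rw [neg_pow, mul_assoc, ← pow_add, show j + (m - j) = m by omega]
    linear_combination ((t.choose j : ABRing) * (-bval) ^ j) * hDh
      + ((t.choose j : ABRing) * (-bval) ^ j) * e1 - (t.choose j : ABRing) * e2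
  rw [Finset.sum_congr rfl step, Finset.sum_sub_distrib, ← Finset.mul_sum, ← Finset.mul_sum,
    alt_sum_choose t (by omega), mul_zero, sub_zero, ← add_pow,
    show -bval + av = av - bval by ring, show m = m - t + t by omega]
  rw [show (av - bval) * (av ^ (m - t + t - t) * (av - bval) ^ (t - 1))
      = av ^ (m - t + t - t) * ((av - bval) ^ (t - 1) * (av - bval)) by ring, ← pow_succ,
    show t - 1 + 1 = t by omega]

lemma msize_eq_sum {N : ℕ} (d : Fin N →₀ ℕ) : msize d = ∑ i : Fin N, d i :=
  Finsupp.sum_fintype _ _ (fun _ => rfl)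

lemma msize_add {N : ℕ} (a b : Fin N →₀ ℕ) : msize (a + b) = msize a + msize b := by
  simp [msize_eq_sum, Finset.sum_add_distrib]

lemma card_le_msize {N : ℕ} (d : Fin N →₀ ℕ) : d.support.card ≤ msize d := by
  rw [show d.support.card = ∑ i ∈ d.support, 1 from Finset.card_eq_sum_ones _]
  exact Finset.sum_le_sum fun i hi =>
    Nat.one_le_iff_ne_zero.mpr (Finsupp.mem_support_iff.mp hi)

def eS {N : ℕ} (S : Finset (Fin N)) : Fin N →₀ ℕ := ∑ l ∈ S, Finsupp.single l 1

lemma eS_apply {N : ℕ} (S : Finset (Fin N)) (i : Fin N) :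
    eS S i = if i ∈ S then 1 else 0 := by
  classical
  rw [eS, Finset.sum_apply']
  simp only [Finsupp.single_apply]
  rw [Finset.sum_ite_eq' S i (fun _ => 1)]

lemma msize_eS {N : ℕ} (S : Finset (Fin N)) : msize (eS S) = S.card := by
  classical
  simp only [msize_eq_sum, eS_apply]
  rw [Finset.sum_ite_mem, Finset.univ_inter, Finset.sum_const, smul_eq_mul, mul_one]

lemma eS_le_iff {N : ℕ} (S : Finset (Fin N)) (d : Fin N →₀ ℕ) :
    eS S ≤ d ↔ S ⊆ d.support := by
  constructor
  · intro h i hi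
    have := (Finsupp.le_def.mp h) i
    rw [eS_apply, if_pos hi] at this
    exact Finsupp.mem_support_iff.mpr (by omega)
  · intro h
    rw [Finsupp.le_def]
    intro i
    rw [eS_apply]
    by_cases hi : i ∈ S
    · rw [if_pos hi]
      exact Nat.one_le_iff_ne_zero.mpr (Finsupp.mem_support_iff.mp (h hi))
    · simp [hi]

lemma msize_sub {N : ℕ} (d e : Fin N →₀ ℕ) (h : e ≤ d) :
    msize (d - e) = msize d - msize e := by
  have : d - e + e = d := tsub_add_cancel_of_le h
  have h2 := msize_add (d - e) e
  rw [this] at h2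
  omega

lemma cellCoeff_eq {N : ℕ} (d : Fin N →₀ ℕ) (hd : d ≠ 0) :
    cellCoeff d = av ^ (msize d - d.support.card) * (av - bval) ^ (d.support.card - 1) := by
  classical
  have hne : d.support.Nonempty := Finsupp.support_nonempty_iff.mpr hd
  have ht1 : 1 ≤ d.support.card := Finset.card_pos.mpr hne
  have htm : d.support.card ≤ msize d := card_le_msize d
  set m := msize d with hm
  set t := d.support.card with htd
  rw [cellCoeff, dif_neg hd]
  have hcard : (d.support.erase (d.support.min' hne)).card = t - 1 :=
    Finset.card_erase_of_mem (Finset.min'_mem _ hne)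
  rw [Finset.sum_powerset_apply_card (fun j => av ^ (m - j - 1) * (-bval) ^ j), hcard,
    show t - 1 + 1 = t by omega,
    show av - bval = -bval + av by ring, add_pow, Finset.mul_sum,
    show t - 1 + 1 = t by omega]
  refine Finset.sum_congr rfl fun j hj => ?_
  rw [Finset.mem_range] at hj
  rw [nsmul_eq_mul, show av ^ (m - j - 1) = av ^ (m - t) * av ^ (t - 1 - j) by
    rw [← pow_add]; congr 1; omega]
  ring

lemma neg_C_mul_X {N : ℕ} (a : Fin N) :
    -(MvPowerSeries.C bval * MvPowerSeries.X a)
      = MvPowerSeries.monomial (Finsupp.single a 1) (-bval) := by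
  classical
  apply MvPowerSeries.ext
  intro n
  rw [map_neg, MvPowerSeries.coeff_C_mul, MvPowerSeries.coeff_X,
    MvPowerSeries.coeff_monomial]
  split <;> simp

lemma prod_term {N : ℕ} (S : Finset (Fin N)) :
    ∏ l ∈ S, (-(MvPowerSeries.C bval * MvPowerSeries.X l))
      = MvPowerSeries.monomial (eS S) ((-bval) ^ S.card) := by
  classical
  induction S using Finset.induction with
  | empty => simp [eS, MvPowerSeries.monomial_zero_one]
  | @insert a s ha ih =>
    rw [Finset.prod_insert ha, ih, neg_C_mul_X, MvPowerSeries.monomial_mul_monomial,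
      Finset.card_insert_of_notMem ha,
      show eS (insert a s) = Finsupp.single a 1 + eS s by rw [eS, eS, Finset.sum_insert ha]]
    congr 1
    rw [pow_succ]
    ring

lemma prod_eq (N : ℕ) :
    (∏ l : Fin N, (1 - MvPowerSeries.C bval * MvPowerSeries.X l))
      = ∑ S ∈ (Finset.univ : Finset (Fin N)).powerset,
          MvPowerSeries.monomial (eS S) ((-bval) ^ S.card) := by
  classical
  calc (∏ l : Fin N, (1 - MvPowerSeries.C bval * MvPowerSeries.X l))
      = ∏ l : Fin N, ((-(MvPowerSeries.C bval * MvPowerSeries.X l)) + 1) :=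
        Finset.prod_congr rfl fun l _ => by ring
    _ = ∑ S ∈ (Finset.univ : Finset (Fin N)).powerset,
          (∏ l ∈ S, -(MvPowerSeries.C bval * MvPowerSeries.X l))
            * ∏ l ∈ Finset.univ \ S, (1 : MvPowerSeries (Fin N) ABRing) :=
        Finset.prod_add _ _ _
    _ = _ := by
        refine Finset.sum_congr rfl fun S _ => ?_
        rw [Finset.prod_const_one, mul_one, prod_term]

/-- Single-cell case of Theorem `main_G_row`: the generating function of
nonempty marked multisets `{a_1 ≤ ⋯ ≤ a_k}` on the interval of variables (each
`a_i` with `i ≥ 2`, `a_{i-1} < a_i` optionally marked), weighted by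
`x_{a_1}⋯x_{a_k} α^{#unmarked−1}(−β)^{#marked}`, equals
`∏_l (1−βx_l) · ∑_{k≥0} h_{1+k}(x)·h_k(α,β)`. -/
theorem single_cell_MMSVT_gf (N : ℕ) (hN : 0 < N) :
    cellGF N
      = (∏ l : Fin N, (1 - MvPowerSeries.C bval * MvPowerSeries.X l)) *
        hSeries N := by
  classical
  apply MvPowerSeries.ext
  intro d
  rw [prod_eq, Finset.sum_mul, map_sum]
  simp only [MvPowerSeries.coeff_monomial_mul]
  rw [show MvPowerSeries.coeff d (cellGF N) = cellCoeff d from rfl]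
  have hch : ∀ e : Fin N →₀ ℕ, MvPowerSeries.coeff e (hSeries N)
      = if msize e = 0 then 0 else hAB (msize e - 1) := fun _ => rfl
  rw [← Finset.sum_subset
      (show d.support.powerset ⊆ (Finset.univ : Finset (Fin N)).powerset from
        Finset.powerset_mono.mpr (Finset.subset_univ _))
      (fun S _ hS => by
        rw [if_neg]
        rw [eS_le_iff]
        exact fun h => hS (Finset.mem_powerset.mpr h))]
  have hstep : ∀ S ∈ d.support.powerset,
      (if eS S ≤ d then (-bval) ^ S.card * MvPowerSeries.coeff (d - eS S) (hSeries N)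
        else 0)
      = (-bval) ^ S.card *
          (if msize d - S.card = 0 then 0 else hAB (msize d - S.card - 1)) := by
    intro S hS
    rw [Finset.mem_powerset] at hS
    have hle : eS S ≤ d := (eS_le_iff S d).mpr hS
    rw [if_pos hle, hch, msize_sub d (eS S) hle, msize_eS]
  rw [Finset.sum_congr rfl hstep,
    Finset.sum_powerset_apply_card
      (fun j => (-bval) ^ j * (if msize d - j = 0 then 0 else hAB (msize d - j - 1)))]
  by_cases hd : d = 0
  · subst hd
    simp [cellCoeff, msize, hAB]
  · have ht1 : 1 ≤ d.support.card :=
      Finset.card_pos.mpr (Finsupp.support_nonempty_iff.mpr hd)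
    have htm : d.support.card ≤ msize d := card_le_msize d
    rw [cellCoeff_eq d hd, ← key d.support.card (msize d) ht1 htm]
    refine Finset.sum_congr rfl fun j _ => ?_
    rw [nsmul_eq_mul]
end
end

section
/- Let T_0 be a reverse plane partition of skew shape λ/μ all of whose entries equal a fixed integer k. Then the sum of wt_L(T) over all left-marked RPPs T with underlying RPP T_0 equals the sum of wt_R(T) over all right-marked RPPs T with underlying RPP T_0, where: in a left-marked RPP an entry at (i,j) may be marked iff T(i,j)=T(i,j+1), contributing -α_j if marked, β_{i-1} if unmarked and equal to the entry above, x_k otherwise; in a right-marked RPP an entry at (i,j) may be marked iff T(i,j)=T(i,j-1), contributing -α_{j-1} if marked, β_i if unmarked and equal to the entry below, x_k otherwise. -/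
/-!
Expanding the sum over markings, each side becomes a product over the cells of the shape of
`-α · [marking allowed] + (β or x)`, so a factor depends only on which of two neighbours a cell
has: right and upper ones on the left-marked side, left and lower ones on the right-marked side.
For a skew shape, i.e. an order-connected set of cells, the classes match up: a cell with an upper
and a right neighbour and the cell with a left and a lower neighbour up and to its right are
corners of the same `2 × 2` square; in every pair of adjacent columns exactly one horizontal
domino has its left cell without upper neighbour (the topmost) and exactly one has its right cell
without lower neighbour (the bottommost); transposing gives the same for vertical dominoes. The
cells contributing a bare `x` are then equinumerous as well.

Cells are kept off row and column `0` so that the truncated `c.1 - 1` and `c.2 - 1` really name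
neighbours.
-/

open Finset

theorem sum_powerset_filter_prod_ite {ι R : Type*} [CommSemiring R] [DecidableEq ι]
    (D : Finset ι) (p : ι → Prop) [DecidablePred p] (A B : ι → R) :
    ∑ S ∈ (D.filter p).powerset, ∏ c ∈ D, (if c ∈ S then A c else B c) =
      ∏ c ∈ D, ((if p c then A c else 0) + B c) := by
  have split : ∀ S ∈ (D.filter p).powerset, ∏ c ∈ D, (if c ∈ S then A c else B c) =
      ((∏ c ∈ S, A c) * ∏ c ∈ D.filter p \ S, B c) * ∏ c ∈ D with ¬p c, B c := by
    intro S hS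
    have hSD : S ⊆ D := (mem_powerset.mp hS).trans (filter_subset p D)
    rw [prod_ite, filter_mem_eq_inter, inter_eq_right.mpr hSD, mul_assoc,
      ← prod_filter_mul_prod_filter_not (D.filter (· ∉ S)) p]
    congr 3 <;> ext c <;> simp only [mem_filter, mem_sdiff] <;> grind
  rw [sum_congr rfl split, ← sum_mul, ← prod_add]
  simp only [ite_add, zero_add, prod_ite]

theorem prod_ite_add_ite {ι R : Type*} [CommSemiring R] (D : Finset ι) (p q : ι → Prop)
    [DecidablePred p] [DecidablePred q] (a b : ι → R) (y : R) :
    ∏ c ∈ D, ((if p c then a c else 0) + if q c then b c else y) =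
      (∏ c ∈ D with p c ∧ q c, (a c + b c)) * (∏ c ∈ D with p c ∧ ¬q c, (a c + y)) *
        (∏ c ∈ D with ¬p c ∧ q c, b c) *
        y ^ (#D - #{c ∈ D | p c ∧ q c} - #{c ∈ D | p c ∧ ¬q c} - #{c ∈ D | ¬p c ∧ q c}) := by
  have hcard : #D = #{c ∈ D | p c ∧ q c} + #{c ∈ D | p c ∧ ¬q c} +
      #{c ∈ D | ¬p c ∧ q c} + #{c ∈ D | ¬p c ∧ ¬q c} := by
    rw [← card_filter_add_card_filter_not p,
      ← card_filter_add_card_filter_not (s := D.filter p) q,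
      ← card_filter_add_card_filter_not (s := D.filter (¬p ·)) q]
    simp only [filter_filter, add_assoc]
  rw [hcard, show ∀ k l m n : ℕ, k + l + m + n - k - l - m = n by omega, ← prod_const,
    ← prod_filter_mul_prod_filter_not D p, ← prod_filter_mul_prod_filter_not (D.filter p) q,
    ← prod_filter_mul_prod_filter_not (D.filter (¬p ·)) q]
  simp only [filter_filter]
  simp +contextual only [mul_assoc, if_true, if_false, zero_add, prod_filter]

section OrdConnected

variable {D : Finset (ℕ × ℕ)}

theorem mem_of_le_of_le (hD : (D : Set (ℕ × ℕ)).OrdConnected) {a b : ℕ × ℕ} (c : ℕ × ℕ)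
    (ha : a ∈ D) (hb : b ∈ D) (hac : a.1 ≤ c.1 ∧ a.2 ≤ c.2) (hcb : c.1 ≤ b.1 ∧ c.2 ≤ b.2) :
    c ∈ D :=
  hD.out ha hb ⟨hac, hcb⟩

@[to_additive]
theorem prod_upRight_eq_prod_leftDown {M : Type*} [CommMonoid M]
    (hD : (D : Set (ℕ × ℕ)).OrdConnected) (hrow : ∀ c ∈ D, 0 < c.1) (hcol : ∀ c ∈ D, 0 < c.2)
    (f : ℕ → ℕ → M) :
    ∏ c ∈ D with (c.1, c.2 + 1) ∈ D ∧ (c.1 - 1, c.2) ∈ D, f (c.1 - 1) c.2 =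
      ∏ c ∈ D with (c.1, c.2 - 1) ∈ D ∧ (c.1 + 1, c.2) ∈ D, f c.1 (c.2 - 1) := by
  refine prod_nbij' (fun c => (c.1 - 1, c.2 + 1)) (fun c => (c.1 + 1, c.2 - 1)) ?_ ?_ ?_ ?_ ?_
  · rintro ⟨i, j⟩ h
    simp only [mem_filter] at h ⊢
    have := hrow _ h.1
    refine ⟨mem_of_le_of_le hD _ h.2.2 h.2.1 ⟨le_rfl, by omega⟩ ⟨by omega, le_rfl⟩, ?_, ?_⟩
    · simpa using h.2.2
    · simpa [Nat.sub_add_cancel this] using h.2.1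
  · rintro ⟨i, j⟩ h
    simp only [mem_filter] at h ⊢
    have := hcol _ h.1
    refine ⟨mem_of_le_of_le hD _ h.2.1 h.2.2 ⟨by omega, le_rfl⟩ ⟨le_rfl, by omega⟩, ?_, ?_⟩
    · simpa [Nat.sub_add_cancel this] using h.2.2
    · simpa using h.2.1
  · rintro ⟨i, j⟩ h
    simp only [mem_filter] at h
    have := hrow _ h.1
    simp only [Nat.add_sub_cancel, Nat.sub_add_cancel this]
  · rintro ⟨i, j⟩ h
    simp only [mem_filter] at h
    have := hcol _ h.1
    simp only [Nat.add_sub_cancel, Nat.sub_add_cancel this]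
  · rintro ⟨i, j⟩ -
    simp

theorem image_snd_filter_notMem_up (hD : (D : Set (ℕ × ℕ)).OrdConnected)
    (hrow : ∀ c ∈ D, 0 < c.1) :
    {c ∈ D | (c.1, c.2 + 1) ∈ D ∧ (c.1 - 1, c.2) ∉ D}.image Prod.snd =
      {c ∈ D | (c.1, c.2 + 1) ∈ D}.image Prod.snd := by
  refine Subset.antisymm (image_subset_image (monotone_filter_right _ fun _ _ h => h.1)) ?_
  simp only [subset_iff, mem_image, mem_filter]
  rintro j ⟨c, hc, rfl⟩
  obtain ⟨t, ht, htop⟩ := exists_min_image {d ∈ D | d.2 = c.2 ∧ (d.1, d.2 + 1) ∈ D} Prod.fst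
    ⟨c, mem_filter.2 ⟨hc.1, rfl, hc.2⟩⟩
  simp only [mem_filter] at ht htop
  refine ⟨t, ⟨ht.1, ht.2.2, fun hup => ?_⟩, ht.2.1⟩
  have := hrow t ht.1
  have hright : (t.1 - 1, t.2 + 1) ∈ D :=
    mem_of_le_of_le hD _ hup ht.2.2 ⟨le_rfl, by omega⟩ ⟨by omega, le_rfl⟩
  have := htop _ ⟨hup, ht.2.1, hright⟩
  omega

theorem image_pred_snd_filter_notMem_down (hD : (D : Set (ℕ × ℕ)).OrdConnected)
    (hcol : ∀ c ∈ D, 0 < c.2) :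
    {c ∈ D | (c.1, c.2 - 1) ∈ D ∧ (c.1 + 1, c.2) ∉ D}.image (·.2 - 1) =
      {c ∈ D | (c.1, c.2 + 1) ∈ D}.image Prod.snd := by
  apply Subset.antisymm
  · simp only [subset_iff, mem_image, mem_filter]
    rintro j ⟨c, hc, rfl⟩
    have := hcol c hc.1
    exact ⟨(c.1, c.2 - 1), ⟨hc.2.1, by simpa [Nat.sub_add_cancel this] using hc.1⟩, rfl⟩
  simp only [subset_iff, mem_image, mem_filter]
  rintro j ⟨c, hc, rfl⟩
  obtain ⟨t, ht, hbot⟩ := exists_max_image {d ∈ D | d.2 = c.2 ∧ (d.1, d.2 + 1) ∈ D} Prod.fst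
    ⟨c, mem_filter.2 ⟨hc.1, rfl, hc.2⟩⟩
  simp only [mem_filter] at ht hbot
  refine ⟨(t.1, t.2 + 1), ⟨ht.2.2, by simpa using ht.1, fun hdown => ?_⟩, by simpa using ht.2.1⟩
  have hleft : (t.1 + 1, t.2) ∈ D :=
    mem_of_le_of_le hD _ ht.1 hdown ⟨by omega, le_rfl⟩ ⟨le_rfl, by omega⟩
  have := hbot _ ⟨hleft, ht.2.1, hdown⟩
  omega

theorem injOn_snd_filter_notMem_up (hD : (D : Set (ℕ × ℕ)).OrdConnected) :
    Set.InjOn (Prod.snd : ℕ × ℕ → ℕ)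
      (D.filter fun c => (c.1, c.2 + 1) ∈ D ∧ (c.1 - 1, c.2) ∉ D) := by
  rintro ⟨i, j⟩ hc ⟨i', j'⟩ hc' hjj
  simp only [coe_filter, Set.mem_ofPred_eq] at hc hc' hjj
  subst hjj
  rcases lt_trichotomy i i' with h | rfl | h
  · exact (hc'.2.2 (mem_of_le_of_le hD _ hc.1 hc'.1 ⟨by omega, le_rfl⟩ ⟨by omega, le_rfl⟩)).elim
  · rfl
  · exact (hc.2.2 (mem_of_le_of_le hD _ hc'.1 hc.1 ⟨by omega, le_rfl⟩ ⟨by omega, le_rfl⟩)).elim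

theorem injOn_pred_snd_filter_notMem_down (hD : (D : Set (ℕ × ℕ)).OrdConnected)
    (hcol : ∀ c ∈ D, 0 < c.2) :
    Set.InjOn (fun c : ℕ × ℕ => c.2 - 1)
      (D.filter fun c => (c.1, c.2 - 1) ∈ D ∧ (c.1 + 1, c.2) ∉ D) := by
  rintro ⟨i, j⟩ hc ⟨i', j'⟩ hc' hjj
  simp only [coe_filter, Set.mem_ofPred_eq] at hc hc' hjj
  have := hcol _ hc.1
  have := hcol _ hc'.1
  obtain rfl : j = j' := by omega
  rcases lt_trichotomy i i' with h | rfl | h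
  · exact (hc.2.2 (mem_of_le_of_le hD _ hc.1 hc'.1 ⟨by omega, le_rfl⟩ ⟨by omega, le_rfl⟩)).elim
  · rfl
  · exact (hc'.2.2 (mem_of_le_of_le hD _ hc'.1 hc.1 ⟨by omega, le_rfl⟩ ⟨by omega, le_rfl⟩)).elim

@[to_additive]
theorem prod_rightNotUp_eq_prod_leftNotDown {M : Type*} [CommMonoid M]
    (hD : (D : Set (ℕ × ℕ)).OrdConnected) (hrow : ∀ c ∈ D, 0 < c.1) (hcol : ∀ c ∈ D, 0 < c.2)
    (f : ℕ → M) :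
    ∏ c ∈ D with (c.1, c.2 + 1) ∈ D ∧ (c.1 - 1, c.2) ∉ D, f c.2 =
      ∏ c ∈ D with (c.1, c.2 - 1) ∈ D ∧ (c.1 + 1, c.2) ∉ D, f (c.2 - 1) := by
  rw [← prod_image (injOn_snd_filter_notMem_up hD), image_snd_filter_notMem_up hD hrow,
    ← image_pred_snd_filter_notMem_down hD hcol,
    prod_image (injOn_pred_snd_filter_notMem_down hD hcol)]

@[to_additive]
theorem prod_upNotRight_eq_prod_downNotLeft {M : Type*} [CommMonoid M]
    (hD : (D : Set (ℕ × ℕ)).OrdConnected) (hrow : ∀ c ∈ D, 0 < c.1) (hcol : ∀ c ∈ D, 0 < c.2)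
    (f : ℕ → M) :
    ∏ c ∈ D with (c.1, c.2 + 1) ∉ D ∧ (c.1 - 1, c.2) ∈ D, f (c.1 - 1) =
      ∏ c ∈ D with (c.1, c.2 - 1) ∉ D ∧ (c.1 + 1, c.2) ∈ D, f c.1 := by
  set D' := D.preimage Prod.swap Prod.swap_injective.injOn
  have hD' : (D' : Set (ℕ × ℕ)).OrdConnected := by
    rw [coe_preimage]
    exact hD.preimage_mono fun _ _ h => Prod.swap_le_swap.2 h
  calc _ = ∏ c ∈ D' with (c.1, c.2 - 1) ∈ D' ∧ (c.1 + 1, c.2) ∉ D', f (c.2 - 1) :=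
        prod_equiv (Equiv.prodComm ℕ ℕ) (by simp [D', and_comm]) (by simp)
    _ = ∏ c ∈ D' with (c.1, c.2 + 1) ∈ D' ∧ (c.1 - 1, c.2) ∉ D', f c.2 :=
        (prod_rightNotUp_eq_prod_leftNotDown hD' (fun c hc => hcol _ (mem_preimage.1 hc))
          (fun c hc => hrow _ (mem_preimage.1 hc)) f).symm
    _ = _ := prod_equiv (Equiv.prodComm ℕ ℕ) (by simp [D', and_comm]) (by simp)

theorem prod_leftMarked_eq_prod_rightMarked {R : Type*} [CommRing R]
    (hD : (D : Set (ℕ × ℕ)).OrdConnected) (hrow : ∀ c ∈ D, 0 < c.1) (hcol : ∀ c ∈ D, 0 < c.2)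
    (alpha beta : ℕ → R) (x : R) :
    ∏ c ∈ D, ((if (c.1, c.2 + 1) ∈ D then -alpha c.2 else 0) +
        if (c.1 - 1, c.2) ∈ D then beta (c.1 - 1) else x) =
      ∏ c ∈ D, ((if (c.1, c.2 - 1) ∈ D then -alpha (c.2 - 1) else 0) +
        if (c.1 + 1, c.2) ∈ D then beta c.1 else x) := by
  have hsquares := sum_upRight_eq_sum_leftDown hD hrow hcol fun _ _ => 1
  have hhoriz := sum_rightNotUp_eq_sum_leftNotDown hD hrow hcol fun _ => 1
  have hvert := sum_upNotRight_eq_sum_downNotLeft hD hrow hcol fun _ => 1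
  simp only [← card_eq_sum_ones] at hsquares hhoriz hvert
  rw [prod_ite_add_ite, prod_ite_add_ite, hsquares, hhoriz, hvert,
    prod_upRight_eq_prod_leftDown hD hrow hcol fun i j => -alpha j + beta i,
    prod_rightNotUp_eq_prod_leftNotDown hD hrow hcol fun j => -alpha j + x,
    prod_upNotRight_eq_prod_downNotLeft hD hrow hcol beta]

end OrdConnected

theorem ordConnected_skewShape {lam mu : ℕ → ℕ} (hlam : Antitone lam) (hmu : Antitone mu)
    (n : ℕ) :
    (((Icc 1 n ×ˢ Icc 1 (lam 1)).filter fun c => mu c.1 < c.2 ∧ c.2 ≤ lam c.1 :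
      Finset (ℕ × ℕ)) : Set (ℕ × ℕ)).OrdConnected := by
  refine ⟨fun a ha b hb c hc => ?_⟩
  simp only [coe_filter, mem_product, mem_Icc, Set.mem_ofPred_eq, Set.mem_Icc, Prod.le_def]
    at ha hb hc ⊢
  have := hmu hc.1.1
  have := hlam hc.2.1
  omega

theorem leftmarked_eq_rightmarked_general {R : Type*} [CommRing R] (n : ℕ)
    (lam mu : ℕ → ℕ)
    (hlam : ∀ i, lam (i + 1) ≤ lam i) (hmu : ∀ i, mu (i + 1) ≤ mu i)
    (alpha beta : ℕ → R) (x : R) :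
    (fun D : Finset (ℕ × ℕ) =>
      (∑ S ∈ (D.filter fun c => (c.1, c.2 + 1) ∈ D).powerset,
          ∏ c ∈ D,
            (if c ∈ S then -alpha c.2
             else if (c.1 - 1, c.2) ∈ D then beta (c.1 - 1) else x))
        =
      (∑ S ∈ (D.filter fun c => (c.1, c.2 - 1) ∈ D).powerset,
          ∏ c ∈ D,
            (if c ∈ S then -alpha (c.2 - 1)
             else if (c.1 + 1, c.2) ∈ D then beta c.1 else x)))
      ((Finset.Icc 1 n ×ˢ Finset.Icc 1 (lam 1)).filter
        fun c => mu c.1 < c.2 ∧ c.2 ≤ lam c.1) := by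
  simp only [sum_powerset_filter_prod_ite]
  refine prod_leftMarked_eq_prod_rightMarked
    (ordConnected_skewShape (antitone_nat_of_succ_le hlam) (antitone_nat_of_succ_le hmu) n)
    (fun c hc => ?_) (fun c hc => ?_) alpha beta x <;>
  · simp only [mem_filter, mem_product, mem_Icc] at hc
    omega

/-- Proposition `leftmarked = rightmarked` for a constant filling: let `λ/μ` be
a skew shape and fill every cell with the same value `k` (so the cell weight
`x_{T(i,j)}` is a single element `x`).  Then the total weight of left-marked
RPPs on this filling equals the total weight of right-marked RPPs:
a left-marking is a set of cells `(i,j)` with `(i,j+1)` in the shape,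
contributing `-α_j` if marked, `β_{i-1}` if unmarked with `(i-1,j)` in the
shape, and `x` otherwise; a right-marking is a set of cells `(i,j)` with
`(i,j-1)` in the shape, contributing `-α_{j-1}` if marked, `β_i` if unmarked
with `(i+1,j)` in the shape, and `x` otherwise. -/
theorem leftmarked_eq_rightmarked {R : Type*} [CommRing R] (n : ℕ)
    (lam mu : ℕ → ℕ)
    (hlam : ∀ i, lam (i + 1) ≤ lam i) (hmu : ∀ i, mu (i + 1) ≤ mu i)
    (hsub : ∀ i, mu i ≤ lam i)
    (alpha beta : ℕ → R) (x : R) :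
    (fun D : Finset (ℕ × ℕ) =>
      (∑ S ∈ (D.filter fun c => (c.1, c.2 + 1) ∈ D).powerset,
          ∏ c ∈ D,
            (if c ∈ S then -alpha c.2
             else if (c.1 - 1, c.2) ∈ D then beta (c.1 - 1) else x))
        =
      (∑ S ∈ (D.filter fun c => (c.1, c.2 - 1) ∈ D).powerset,
          ∏ c ∈ D,
            (if c ∈ S then -alpha (c.2 - 1)
             else if (c.1 + 1, c.2) ∈ D then beta c.1 else x)))
      ((Finset.Icc 1 n ×ˢ Finset.Icc 1 (lam 1)).filter
        fun c => mu c.1 < c.2 ∧ c.2 ≤ lam c.1) :=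
  leftmarked_eq_rightmarked_general n lam mu hlam hmu alpha beta x
end

section
/- Let λ, μ be partitions of length at most n with μ ⊆ λ and suppose μ_t ≥ λ_{t+1} for some 1 ≤ t ≤ n-1. Let M = (a_{i,j})_{i,j=1}^n be a matrix over a commutative ring such that a_{i,j} = 0 whenever λ_i - μ_j - i + j < 0, and additionally λ satisfies λ_b ≤ λ_a + 1 for all a < b (λ is a 'dented partition'). Then a_{i,j} = 0 for all t+1 ≤ i ≤ n and 1 ≤ j ≤ t, and consequently det M = det(a_{i,j})_{i,j=1}^t · det(a_{i,j})_{i,j=t+1}^n. -/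
/-!
For a lower-left entry (row `i ≥ t+1`, column `j ≤ t`, 1-indexed) we have
`λ_{t+1} ≤ μ_t ≤ μ_j`. If `i = t+1` this gives `λ_i - μ_j ≤ 0 < i - j`; otherwise the dent
condition gives `λ_i ≤ λ_{t+1} + 1`, so `λ_i - μ_j ≤ 1 < i - j`. So the lower-left block
vanishes and the determinant of the block upper-triangular matrix factors.
-/

namespace Matrix

variable {R : Type*} [CommRing R]

theorem det_eq_det_mul_det_of_lowerLeft_eq_zero {n t : ℕ} (ht : t ≤ n)
    (a : Matrix (Fin n) (Fin n) R)
    (h : ∀ i j : Fin n, t ≤ (i : ℕ) → (j : ℕ) < t → a i j = 0) :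
    a.det =
      (of fun i j : Fin t => a ⟨i, by omega⟩ ⟨j, by omega⟩).det *
      (of fun i j : Fin (n - t) => a ⟨t + i, by omega⟩ ⟨t + j, by omega⟩).det := by
  let e : Fin t ⊕ Fin (n - t) ≃ Fin n := finSumFinEquiv.trans (finCongr (by omega))
  have he_inl (i : Fin t) : e (Sum.inl i) = ⟨i, by omega⟩ := by ext; simp [e]
  have he_inr (j : Fin (n - t)) : e (Sum.inr j) = ⟨t + j, by omega⟩ := by ext; simp [e]
  have hblocks : a.submatrix e e = fromBlocks
      (of fun i j : Fin t => a ⟨i, by omega⟩ ⟨j, by omega⟩)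
      (of fun (i : Fin t) (j : Fin (n - t)) => a ⟨i, by omega⟩ ⟨t + j, by omega⟩)
      0
      (of fun i j : Fin (n - t) => a ⟨t + i, by omega⟩ ⟨t + j, by omega⟩) := by
    ext (i | i) (j | j) <;>
      simp only [submatrix_apply, fromBlocks_apply₁₁, fromBlocks_apply₁₂,
        fromBlocks_apply₂₁, fromBlocks_apply₂₂, of_apply, he_inl, he_inr, zero_apply]
    exact h _ _ (by simp) j.isLt
  rw [← det_submatrix_equiv_self e a, hblocks, det_fromBlocks_zero₂₁]

end Matrix

theorem sub_sub_add_neg_of_dented {n t : ℕ} (ht : t < n) {lam mu : Fin n → ℕ}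
    (hdent : ∀ a b : Fin n, a < b → lam b ≤ lam a + 1) (hmu : Antitone mu)
    (hT : lam ⟨t, ht⟩ ≤ mu ⟨t - 1, tsub_lt_of_lt ht⟩) {i j : Fin n}
    (hi : t ≤ (i : ℕ)) (hj : (j : ℕ) < t) :
    (lam i : ℤ) - (mu j : ℤ) - ((i : ℕ) : ℤ) + ((j : ℕ) : ℤ) < 0 := by
  have hmu_j : mu ⟨t - 1, by omega⟩ ≤ mu j := hmu (Fin.le_def.mpr (by simp; omega))
  rcases hi.eq_or_lt with rfl | hi
  · have : lam i ≤ mu j := hT.trans hmu_j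
    omega
  · have : lam i ≤ lam ⟨t, ht⟩ + 1 := hdent _ _ (Fin.lt_def.mpr hi)
    omega

/-- Determinant factorization in Lemma `rec1-dual`: let `λ` be a dented
partition (`λ_b ≤ λ_a + 1` for `a < b`), `μ ⊆ λ` a partition, and suppose
`μ_t ≥ λ_{t+1}` for some `1 ≤ t ≤ n-1` (1-indexed).  If `a i j = 0` whenever
`λ_i - μ_j - i + j < 0`, then `a i j = 0` on the lower-left block
(`t+1 ≤ i ≤ n`, `1 ≤ j ≤ t`), and consequently
`det a = det (a)_{1..t} · det (a)_{t+1..n}`. -/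
theorem dented_det_block_factorization {R : Type*} [CommRing R] (n t : ℕ)
    (ht2 : t < n)
    (lam mu : Fin n → ℕ)
    (hdent : ∀ a b : Fin n, a < b → lam b ≤ lam a + 1)
    (hmu : ∀ i j : Fin n, i ≤ j → mu j ≤ mu i)
    (hT : lam ⟨t, ht2⟩ ≤ mu ⟨t - 1, by omega⟩)
    (a : Matrix (Fin n) (Fin n) R)
    (ha : ∀ i j : Fin n,
      (lam i : ℤ) - (mu j : ℤ) - ((i : ℕ) : ℤ) + ((j : ℕ) : ℤ) < 0 → a i j = 0) :
    (∀ i j : Fin n, t ≤ (i : ℕ) → (j : ℕ) < t → a i j = 0) ∧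
    a.det =
      (Matrix.of fun i j : Fin t =>
          a ⟨i, by have := i.isLt; omega⟩ ⟨j, by have := j.isLt; omega⟩).det *
      (Matrix.of fun i j : Fin (n - t) =>
          a ⟨t + i, by have := i.isLt; omega⟩ ⟨t + j, by have := j.isLt; omega⟩).det := by
  have hlowerLeft : ∀ i j : Fin n, t ≤ (i : ℕ) → (j : ℕ) < t → a i j = 0 :=
    fun i j hi hj => ha i j (sub_sub_add_neg_of_dented ht2 hdent hmu hT hi hj)
  exact ⟨hlowerLeft, Matrix.det_eq_det_mul_det_of_lowerLeft_eq_zero ht2.le a hlowerLeft⟩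
end

section
/- For positive integers r ≤ s and formal variables x_r,…,x_s, α, β, call a marked multiset on [r,s] a finite multiset S = {a_1 ≤ ⋯ ≤ a_k} with r ≤ a_i ≤ s in which each a_i with i ≥ 2 and a_{i-1} < a_i is optionally marked, and write x^S = x_{a_1}⋯x_{a_k}. Then, as formal power series, ∑_{nonempty marked multisets S on [r,s]} x^S α^{unmarked(S)-1} (-β)^{marked(S)} = (1/(α-β))·(∏_{l=r}^{s} (1-βx_l)/(1-αx_l) − 1), where unmarked(S) and marked(S) are the numbers of unmarked and marked elements of S. -/
open MvPolynomial

noncomputable section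

/-! ### Auxiliary definitions and lemmas -/

/-- Coefficients of the one-variable series `(1-βx)/(1-αx) = 1 + ∑_{n≥1} α^{n-1}(α-β)x^n`. -/
def gcoef : ℕ → ABRing
  | 0 => 1
  | n + 1 => av ^ n * (av - bval)

/-- The series `(1-βx_l)/(1-αx_l)` as a multivariate power series. -/
def gser {N : ℕ} (l : Fin N) : MvPowerSeries (Fin N) ABRing :=
  fun e => if e = Finsupp.single l (e l) then gcoef (e l) else 0

lemma gser_apply_single {N : ℕ} (l : Fin N) (n : ℕ) :
    gser l (Finsupp.single l n) = gcoef n := by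
  simp [gser]

lemma coeff_gser {N : ℕ} (l : Fin N) (d : Fin N →₀ ℕ) :
    MvPowerSeries.coeff d (gser l)
      = if d = Finsupp.single l (d l) then gcoef (d l) else 0 := rfl

lemma C_mul_X_eq_monomial {N : ℕ} (l : Fin N) (a : ABRing) :
    MvPowerSeries.C (σ := Fin N) (R := ABRing) a * MvPowerSeries.X l
      = MvPowerSeries.monomial (Finsupp.single l 1) a := by
  rw [MvPowerSeries.X_def, ← MvPowerSeries.monomial_zero_eq_C_apply,
    MvPowerSeries.monomial_mul_monomial, zero_add, mul_one]

/-- The per-variable identity `g_l · (1 - α x_l) = 1 - β x_l`. -/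
lemma gser_mul {N : ℕ} (l : Fin N) :
    gser l * (1 - MvPowerSeries.C (σ := Fin N) (R := ABRing) av * MvPowerSeries.X l)
      = 1 - MvPowerSeries.C (σ := Fin N) (R := ABRing) bval * MvPowerSeries.X l := by
  apply MvPowerSeries.ext
  intro d
  rw [mul_sub, mul_one, map_sub, map_sub, C_mul_X_eq_monomial, C_mul_X_eq_monomial,
    MvPowerSeries.coeff_mul_monomial, MvPowerSeries.coeff_monomial,
    MvPowerSeries.coeff_one, coeff_gser]
  by_cases h : d = Finsupp.single l (d l)
  · -- `d` is supported on `{l}`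
    by_cases hn : d l = 0
    · have hd0 : d = 0 := by rw [h, hn, Finsupp.single_zero]
      have h1 : ¬ Finsupp.single l 1 ≤ d := by
        rw [Finsupp.single_le_iff, hn]; omega
      have h2 : d ≠ Finsupp.single l 1 := by
        intro hc
        have := DFunLike.congr_fun hc l
        rw [hn] at this
        simp at this
      rw [if_pos h, if_neg h1, if_pos hd0, if_neg h2, hn]
      simp [gcoef]
    · obtain ⟨m, hm⟩ : ∃ m, d l = m + 1 := ⟨d l - 1, by omega⟩
      have h1 : Finsupp.single l 1 ≤ d := by
        rw [Finsupp.single_le_iff]; omega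
      have hsub : d - Finsupp.single l 1 = Finsupp.single l m := by
        conv_lhs => rw [h, hm]
        rw [← Finsupp.single_tsub]
        norm_num
      have h0 : d ≠ 0 := by
        intro hc; rw [hc] at hm; simp at hm
      rw [if_pos h, if_neg h0, if_pos h1, hsub, hm]
      have hg : MvPowerSeries.coeff (Finsupp.single l m) (gser l) = gcoef m := by
        rw [coeff_gser]; simp
      rw [hg]
      by_cases hm0 : m = 0
      · subst hm0
        have h2 : d = Finsupp.single l 1 := by rw [h, hm]
        rw [if_pos h2]
        simp only [gcoef]
        ring
      · have h2 : d ≠ Finsupp.single l 1 := by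
          intro hc
          apply hm0
          have := DFunLike.congr_fun hc l
          rw [hm] at this
          simp only [Finsupp.single_eq_same] at this
          omega
        rw [if_neg h2]
        obtain ⟨p, rfl⟩ : ∃ p, m = p + 1 := ⟨m - 1, by omega⟩
        simp only [gcoef]
        ring
  · -- `d` is not supported on `{l}`
    have h0 : d ≠ 0 := by
      intro hc; apply h; rw [hc]; simp
    have h2 : d ≠ Finsupp.single l 1 := by
      intro hc; apply h; rw [hc]; simp
    rw [if_neg h, if_neg h0, if_neg h2]
    by_cases h1 : Finsupp.single l 1 ≤ d
    · set e := d - Finsupp.single l 1 with he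
      have hval : e l = d l - 1 := by
        rw [he, Finsupp.tsub_apply, Finsupp.single_eq_same]
      have hd : d = e + Finsupp.single l 1 := by
        rw [he]; exact (tsub_add_cancel_of_le h1).symm
      have hsub : e ≠ Finsupp.single l (e l) := by
        intro hc
        apply h
        have hge : 1 ≤ d l := Finsupp.single_le_iff.mp h1
        conv_lhs => rw [hd]
        rw [hc, hval, ← Finsupp.single_add]
        congr 1
        omega
      rw [if_pos h1, coeff_gser, if_neg hsub]
      ring
    · rw [if_neg h1]

/-- The diagonal splitting of an exponent vector, `l ↦ single l (d l)`. -/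
def diagSplit {N : ℕ} (d : Fin N →₀ ℕ) : Fin N →₀ (Fin N →₀ ℕ) :=
  Finsupp.onFinset d.support (fun l => Finsupp.single l (d l))
    (by
      intro l hne
      rw [Finsupp.mem_support_iff]
      intro hd
      apply hne
      show Finsupp.single l (d l) = 0
      rw [hd, Finsupp.single_zero])

lemma diagSplit_apply {N : ℕ} (d : Fin N →₀ ℕ) (l : Fin N) :
    diagSplit d l = Finsupp.single l (d l) := rfl

/-- Closed form for the `(α-β)`-rescaled cell coefficient. -/
lemma cell_algebra {N : ℕ} (d : Fin N →₀ ℕ) (hd : d ≠ 0) :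
    (av - bval) * cellCoeff d = ∏ l ∈ d.support, av ^ (d l - 1) * (av - bval) := by
  classical
  have hne : d.support.Nonempty := Finsupp.support_nonempty_iff.mpr hd
  set t := d.support.card with ht
  have htpos : 1 ≤ t := Finset.card_pos.mpr hne
  set T := d.support.erase (d.support.min' hne) with hT
  have hTcard : T.card = t - 1 := Finset.card_erase_of_mem (Finset.min'_mem _ _)
  set k := ∑ l ∈ d.support, (d l - 1) with hk
  have hm : msize d = k + t := by
    have h1 : msize d = ∑ l ∈ d.support, d l := rfl
    have h2 : ∑ l ∈ d.support, d l = ∑ l ∈ d.support, ((d l - 1) + 1) := by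
      apply Finset.sum_congr rfl
      intro l hl
      have := Finsupp.mem_support_iff.mp hl
      omega
    rw [h1, h2, Finset.sum_add_distrib, Finset.sum_const, smul_eq_mul, mul_one]
  -- right hand side
  have hrhs : ∏ l ∈ d.support, av ^ (d l - 1) * (av - bval)
      = av ^ k * (av - bval) ^ t := by
    rw [Finset.prod_mul_distrib, Finset.prod_const, Finset.prod_pow_eq_pow_sum, ht]
  -- expand the binomial sum
  have hbin : ∑ S ∈ T.powerset, av ^ (msize d - S.card - 1) * (-bval) ^ S.card
      = av ^ k * (av - bval) ^ (t - 1) := by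
    have hprod := Finset.prod_add (fun _ : Fin N => -bval) (fun _ : Fin N => av) T
    simp only [Finset.prod_const] at hprod
    have hstep : ∑ S ∈ T.powerset, av ^ (msize d - S.card - 1) * (-bval) ^ S.card
        = av ^ k * ∑ S ∈ T.powerset, (-bval) ^ S.card * av ^ (T \ S).card := by
      rw [Finset.mul_sum]
      apply Finset.sum_congr rfl
      intro S hS
      have hsub : S ⊆ T := Finset.mem_powerset.mp hS
      have hcard : S.card ≤ t - 1 := hTcard ▸ Finset.card_le_card hsub
      have hsd : (T \ S).card = (t - 1) - S.card := by
        rw [Finset.card_sdiff_of_subset hsub, hTcard]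
      have hexp : msize d - S.card - 1 = k + ((t - 1) - S.card) := by omega
      rw [hexp, hsd, pow_add]
      ring
    rw [hstep, ← hprod, hTcard]
    have : -bval + av = av - bval := by ring
    rw [this]
  rw [cellCoeff, dif_neg hd, ← hT, hbin, hrhs]
  have : (av - bval) * ((av - bval) ^ (t - 1)) = (av - bval) ^ t := by
    rw [← pow_succ']
    congr 1
    omega
  calc (av - bval) * (av ^ k * (av - bval) ^ (t - 1))
      = av ^ k * ((av - bval) * (av - bval) ^ (t - 1)) := by ring
    _ = av ^ k * (av - bval) ^ t := by rw [this]

/-- The rescaled cell generating function factors as `∏ g_l`. -/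
lemma key_s17 (N : ℕ) :
    MvPowerSeries.C (σ := Fin N) (R := ABRing) (av - bval) * cellGF N + 1
      = ∏ l : Fin N, gser l := by
  classical
  apply MvPowerSeries.ext
  intro d
  rw [map_add, MvPowerSeries.coeff_C_mul, MvPowerSeries.coeff_one,
    MvPowerSeries.coeff_prod]
  have hmem : diagSplit d ∈ Finset.finsuppAntidiag Finset.univ d := by
    rw [Finset.mem_finsuppAntidiag]
    refine ⟨?_, Finset.subset_univ _⟩
    have : ∀ l, diagSplit d l = Finsupp.single l (d l) := fun l => rfl
    calc Finset.univ.sum ⇑(diagSplit d)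
        = ∑ l : Fin N, Finsupp.single l (d l) := by
          apply Finset.sum_congr rfl; intro l _; exact this l
      _ = d := Finsupp.univ_sum_single d
  rw [Finset.sum_eq_single_of_mem (diagSplit d) hmem ?uniq]
  case uniq =>
    intro f hf hne
    by_contra hprod
    have hfac : ∀ l : Fin N, MvPowerSeries.coeff (f l) (gser l) ≠ 0 := by
      intro l
      exact (Finset.prod_ne_zero_iff.mp hprod) l (Finset.mem_univ l)
    have hform : ∀ l : Fin N, f l = Finsupp.single l ((f l) l) := by
      intro l
      by_contra hc
      exact hfac l (by rw [coeff_gser, if_neg hc])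
    apply hne
    have hsum : Finset.univ.sum ⇑f = d := (Finset.mem_finsuppAntidiag.mp hf).1
    apply Finsupp.ext
    intro l
    have hdl : (f l) l = d l := by
      have h1 : (∑ i : Fin N, f i) l = d l := by rw [hsum]
      rw [Finsupp.finset_sum_apply] at h1
      rw [← h1]
      symm
      apply Finset.sum_eq_single_of_mem l (Finset.mem_univ l)
      intro i _ hil
      rw [hform i, Finsupp.single_eq_of_ne hil.symm]
    rw [diagSplit_apply]
    conv_lhs => rw [hform l]
    rw [hdl]
  -- evaluate the product at the diagonal splitting
  have hval : ∏ l : Fin N, MvPowerSeries.coeff (diagSplit d l) (gser l)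
      = ∏ l ∈ d.support, av ^ (d l - 1) * (av - bval) := by
    have h1 : ∀ l : Fin N, MvPowerSeries.coeff (diagSplit d l) (gser l)
        = gcoef (d l) := by
      intro l
      rw [diagSplit_apply]
      exact gser_apply_single l (d l)
    calc ∏ l : Fin N, MvPowerSeries.coeff (diagSplit d l) (gser l)
        = ∏ l : Fin N, gcoef (d l) := by
          apply Finset.prod_congr rfl; intro l _; exact h1 l
      _ = ∏ l ∈ d.support, gcoef (d l) := by
          symm
          apply Finset.prod_subset (Finset.subset_univ _)
          intro l _ hl
          rw [Finsupp.notMem_support_iff.mp hl]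
          rfl
      _ = ∏ l ∈ d.support, av ^ (d l - 1) * (av - bval) := by
          apply Finset.prod_congr rfl
          intro l hl
          have hpos := Finsupp.mem_support_iff.mp hl
          obtain ⟨m, hm⟩ : ∃ m, d l = m + 1 := ⟨d l - 1, by omega⟩
          rw [hm]
          simp only [gcoef, Nat.add_sub_cancel]
  rw [hval]
  by_cases hd : d = 0
  · subst hd
    rw [if_pos rfl]
    have h0 : MvPowerSeries.coeff (0 : Fin N →₀ ℕ) (cellGF N) = 0 := by
      simp [cellGF, cellCoeff, MvPowerSeries.coeff_apply]
    rw [h0, mul_zero, zero_add]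
    simp
  · rw [if_neg hd, add_zero]
    have hc : MvPowerSeries.coeff d (cellGF N) = cellCoeff d := rfl
    rw [hc]
    exact cell_algebra d hd

/-- Single-cell generating function identity with canonical parameters `α, β`:
`∑_{nonempty marked multisets} x^S α^{u-1}(-β)^v = (1/(α-β))·(∏_l (1-βx_l)/(1-αx_l) − 1)`,
stated multiplied through by `(α-β)` and by `∏_l (1-αx_l)`:
`((α−β)·LHS + 1)·∏_{l}(1−αx_l) = ∏_{l}(1−βx_l)`. -/
theorem single_cell_canonical_gf (N : ℕ) (hN : 0 < N) :
    ((MvPowerSeries.C (σ := Fin N) (R := ABRing) (av - bval)) * cellGF N + 1) *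
        (∏ l : Fin N, (1 - MvPowerSeries.C (σ := Fin N) (R := ABRing) av * MvPowerSeries.X l))
      = ∏ l : Fin N, (1 - MvPowerSeries.C (σ := Fin N) (R := ABRing) bval * MvPowerSeries.X l) := by
  rw [key_s17 N, ← Finset.prod_mul_distrib]
  exact Finset.prod_congr rfl fun l _ => gser_mul l
end
end

section
/- Let n ≥ 1 and let λ, μ ∈ Par_n with μ ⊆ λ, and let i, j, k satisfy 1 ≤ i ≤ k ≤ j ≤ n, with μ_j ≤ μ_k < λ_k ≤ λ_i. Then the plethystic entry h_{λ_i−μ_j−i+j}[−A_{λ_i−1}+A_{μ_j}+B_{i−1}−B_{j−1}] equals (−1)^{λ_i−μ_j−i+j}·e_{λ_i−μ_j−i+j}(α_{μ_j+1},…,α_{λ_i−1},β_i,…,β_{j−1}), and this is zero because the number of listed variables, (λ_i−1−μ_j)+(j−i), is strictly less than λ_i−μ_j−i+j... correction: equals (λ_i−μ_j−1)+(j−i) = λ_i−μ_j−i+j−1 < λ_i−μ_j−i+j. Hence the entry vanishes. -/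
theorem Multiset.esymm_eq_zero_of_card_lt {R : Type*} [CommSemiring R] {s : Multiset R} {k : ℕ}
    (h : Multiset.card s < k) : s.esymm k = 0 := by
  rw [Multiset.esymm, Multiset.powersetCard_eq_empty k h, Multiset.map_zero, Multiset.sum_zero]

theorem plethystic_entry_vanishes_general {R : Type*} [CommRing R]
    (alpha beta : ℕ → R) (i j k li lk mj mk : ℕ)
    (h1 : 1 ≤ i) (hik : i ≤ k) (hkj : k ≤ j)
    (h2 : mj ≤ mk) (h3 : mk < lk) (h4 : lk ≤ li) :
    (-1 : R) ^ (li + j - mj - i) *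
      (((Finset.Icc (mj + 1) (li - 1)).val.map alpha) +
        ((Finset.Icc i (j - 1)).val.map beta)).esymm (li + j - mj - i) = 0 := by
  have hcard : Multiset.card (((Finset.Icc (mj + 1) (li - 1)).val.map alpha) +
      ((Finset.Icc i (j - 1)).val.map beta)) = (li - 1 - mj) + (j - i) := by
    simp only [Multiset.card_add, Multiset.card_map, Finset.card_val, Nat.card_Icc]
    omega
  rw [Multiset.esymm_eq_zero_of_card_lt (by omega), mul_zero]

/-- Vanishing of the entry (eq. `R_ij = 0`): with `1 ≤ i ≤ k ≤ j ≤ n` and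
`μ_j ≤ μ_k < λ_k ≤ λ_i`, setting `m = λ_i − μ_j − i + j`, the entry
`h_m[−A_{λ_i−1}+A_{μ_j}+B_{i−1}−B_{j−1}]
  = (−1)^m·e_m(α_{μ_j+1},…,α_{λ_i−1},β_i,…,β_{j−1})`
vanishes, since the number of listed variables is `m − 1 < m`. -/
theorem plethystic_entry_vanishes {R : Type*} [CommRing R]
    (alpha beta : ℕ → R) (n i j k li lk mj mk : ℕ)
    (h1 : 1 ≤ i) (hik : i ≤ k) (hkj : k ≤ j) (hjn : j ≤ n)
    (h2 : mj ≤ mk) (h3 : mk < lk) (h4 : lk ≤ li) :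
    (-1 : R) ^ (li + j - mj - i) *
      (((Finset.Icc (mj + 1) (li - 1)).val.map alpha) +
        ((Finset.Icc i (j - 1)).val.map beta)).esymm (li + j - mj - i) = 0 :=
  plethystic_entry_vanishes_general alpha beta i j k li lk mj mk h1 hik hkj h2 h3 h4
end
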